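/- For every positive integer k and every x ∈ P¹(F), the k-th iterate of θ satisfies θ^k(x) = ψ(s^k(ψ(x))). -/

import Mathlib

open OnePoint

variable (F : Type*) [Field F] [DecidableEq F]

/-- The map `θ(x) = x + x⁻¹`, with `θ(0) = θ(∞) = ∞`. -/
def theta : OnePoint F → OnePoint F
  | Option.some x => if x = 0 then ∞ else Option.some (x + x⁻¹)
  | Option.none => ∞

/-- The inverse-square map `s(x) = x⁻²`, with `s(0) = ∞`, `s(∞) = 0`. -/
def sMap : OnePoint F → OnePoint F
  | Option.some x => if x = 0 then ∞ else Option.some (x⁻¹ ^ 2)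
  | Option.none => Option.some 0

/-- The involution `ψ(x) = (x+1)/(x-1)`, with `ψ(1) = ∞`, `ψ(∞) = 1`. -/
def psi : OnePoint F → OnePoint F
  | Option.some x => if x = 1 then ∞ else Option.some ((x + 1) / (x - 1))
  | Option.none => Option.some 1

/-!
In characteristic 3 the involution `ψ` conjugates `θ` to `s`: for `x ∉ {0, 1, -1}` both
`ψ(θ(x))` and `s(ψ(x))` equal `((x - 1)/(x + 1))²`, because `x² + x + 1 = (x - 1)²` and
`x² - x + 1 = (x + 1)²`, and the points `∞, 0, 1, -1` are checked by hand. Iterating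
`ψ ∘ θ = s ∘ ψ` gives `ψ ∘ θ^k = s^k ∘ ψ`.
-/

@[simp] lemma theta_infty : theta F ∞ = ∞ := rfl

@[simp] lemma theta_coe_zero : theta F ((0 : F) : OnePoint F) = ∞ := if_pos rfl

lemma theta_coe_of_ne_zero {x : F} (hx : x ≠ 0) :
    theta F (x : OnePoint F) = ((x + x⁻¹ : F) : OnePoint F) := if_neg hx

@[simp] lemma sMap_infty : sMap F ∞ = ((0 : F) : OnePoint F) := rfl

@[simp] lemma sMap_coe_zero : sMap F ((0 : F) : OnePoint F) = ∞ := if_pos rfl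

lemma sMap_coe_of_ne_zero {x : F} (hx : x ≠ 0) :
    sMap F (x : OnePoint F) = ((x⁻¹ ^ 2 : F) : OnePoint F) := if_neg hx

@[simp] lemma psi_infty : psi F ∞ = ((1 : F) : OnePoint F) := rfl

@[simp] lemma psi_coe_one : psi F ((1 : F) : OnePoint F) = ∞ := if_pos rfl

lemma psi_coe_of_ne_one {x : F} (hx : x ≠ 1) :
    psi F (x : OnePoint F) = (((x + 1) / (x - 1) : F) : OnePoint F) := if_neg hx

lemma ringChar_ne_two_of_charP_three {R : Type*} [NonAssocSemiring R] [CharP R 3] :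
    ringChar R ≠ 2 := by
  rw [ringChar.eq R 3]
  decide

theorem psi_involutive (hF : ringChar F ≠ 2) : Function.Involutive (psi F) := by
  have h2 : (2 : F) ≠ 0 := Ring.two_ne_zero hF
  intro x
  cases x with
  | infty => simp
  | coe x =>
    rcases eq_or_ne x 1 with rfl | hx
    · simp
    have hx' : x - 1 ≠ 0 := sub_ne_zero.mpr hx
    have hne : (x + 1) / (x - 1) ≠ 1 := by
      rw [Ne, div_eq_one_iff_eq hx']
      exact fun h => h2 (by linear_combination h)
    rw [psi_coe_of_ne_one F hx, psi_coe_of_ne_one F hne]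
    congr 1
    field_simp
    rw [show x + 1 + (x - 1) = x * 2 by ring, show x + 1 - (x - 1) = 2 by ring,
      mul_div_cancel_right₀ x h2]

lemma sMap_psi_coe {x : F} (h1 : x ≠ 1) (hm1 : x ≠ -1) :
    sMap F (psi F x) = ((((x - 1) / (x + 1)) ^ 2 : F) : OnePoint F) := by
  have hx1 : x - 1 ≠ 0 := sub_ne_zero.mpr h1
  have hx1' : x + 1 ≠ 0 := fun h => hm1 (by linear_combination h)
  rw [psi_coe_of_ne_one F h1, sMap_coe_of_ne_zero F (div_ne_zero hx1' hx1), inv_div]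

lemma psi_theta_coe [CharP F 3] {x : F} (h0 : x ≠ 0) (hm1 : x ≠ -1) :
    psi F (theta F x) = ((((x - 1) / (x + 1)) ^ 2 : F) : OnePoint F) := by
  have h3 := CharP.cast_eq_zero F 3
  have hx1' : x + 1 ≠ 0 := fun h => hm1 (by linear_combination h)
  have hplus : x + x⁻¹ + 1 = (x - 1) ^ 2 / x := by
    field_simp
    linear_combination x * h3
  have hminus : x + x⁻¹ - 1 = (x + 1) ^ 2 / x := by
    field_simp
    linear_combination -x * h3
  have hθ : x + x⁻¹ ≠ 1 := by
    rw [← sub_ne_zero, hminus]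
    exact div_ne_zero (pow_ne_zero 2 hx1') h0
  rw [theta_coe_of_ne_zero F h0, psi_coe_of_ne_one F hθ, hplus, hminus,
    div_div_div_cancel_right₀ h0, div_pow]

theorem psi_semiconj_theta_sMap [CharP F 3] :
    Function.Semiconj (psi F) (theta F) (sMap F) := by
  intro x
  cases x with
  | infty => simp [sMap_coe_of_ne_zero F one_ne_zero]
  | coe x =>
    rcases eq_or_ne x (-1) with rfl | hm1
    · have hθ : (-1 : F) + (-1)⁻¹ = 1 := by
        rw [inv_neg_one]
        linear_combination -CharP.cast_eq_zero F 3
      rw [theta_coe_of_ne_zero F (neg_ne_zero.mpr one_ne_zero), hθ, psi_coe_one,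
        psi_coe_of_ne_one F (Ring.neg_one_ne_one_of_char_ne_two ringChar_ne_two_of_charP_three)]
      simp
    rcases eq_or_ne x 0 with rfl | h0
    · rw [sMap_psi_coe F zero_ne_one hm1]
      simp
    rcases eq_or_ne x 1 with rfl | h1
    · rw [psi_theta_coe F h0 hm1]
      simp
    rw [psi_theta_coe F h0 hm1, sMap_psi_coe F h1 hm1]

theorem theta_iterate_eq [CharP F 3] (k : ℕ) (x : OnePoint F) :
    (theta F)^[k] x = psi F ((sMap F)^[k] (psi F x)) := by
  rw [← (psi_semiconj_theta_sMap F).iterate_right k x,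
    psi_involutive F ringChar_ne_two_of_charP_three]
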